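/- arXiv:1405.1785 — 5 statements merged into one kernel-verified Lean document; each statement's English description precedes it below -/
import Mathlib

section
/- Let n ≥ 1 and let A = (A_{ij}) be an n×n real matrix whose associated quadratic form is positive definite, i.e. Σ_{i,j} A_{ij} v_i v_j > 0 for every nonzero v ∈ ℝⁿ. If b = (b_1, …, b_n) ∈ ℂⁿ satisfies Σ_{j=1}^n A_{ij} b_i b_j = 0 for every 1 ≤ i ≤ n, then b = 0. In other words, the system of quadratic equations Σ_{j=1}^n A_{ij} x_i x_j = 0 (1 ≤ i ≤ n) has only the trivial solution in ℂⁿ. -/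
/-!
Each equation factors as `b i * (A b) i = 0`, so `(A b) i = 0` wherever `b i ≠ 0`. Since `A` is
real, applying any `ℝ`-linear functional `f : ℂ → ℝ` (the real or imaginary part) gives
`f (b i) * (A (f ∘ b)) i = 0` for every `i`. Summing over `i`, the quadratic form vanishes at
the real vector `f ∘ b`, which is therefore zero by positive definiteness.
-/

open Finset

variable {ι : Type*} [Fintype ι]

lemma eq_zero_of_forall_mul_sum_eq_zero {A : ι → ι → ℝ}
    (hA : ∀ v : ι → ℝ, v ≠ 0 → 0 < ∑ i, ∑ j, A i j * v i * v j)
    {v : ι → ℝ} (hv : ∀ i, v i * ∑ j, A i j * v j = 0) : v = 0 := by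
  by_contra hne
  have hzero : ∑ i, ∑ j, A i j * v i * v j = 0 := by
    refine sum_eq_zero fun i _ => ?_
    rw [← hv i, mul_sum]
    exact sum_congr rfl fun j _ => by ring
  exact (hA v hne).ne' hzero

lemma map_mul_sum_eq_zero {A : ι → ι → ℝ} {b : ι → ℂ}
    (hb : ∀ i, ∑ j, (A i j : ℂ) * b i * b j = 0) (f : ℂ →ₗ[ℝ] ℝ) (i : ι) :
    f (b i) * ∑ j, A i j * f (b j) = 0 := by
  have hfactor : b i * ∑ j, (A i j : ℂ) * b j = 0 := by
    rw [← hb i, mul_sum]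
    exact sum_congr rfl fun j _ => by ring
  rcases mul_eq_zero.mp hfactor with hbi | hrow
  · rw [hbi, map_zero, zero_mul]
  · have hfrow := congrArg f hrow
    simp only [map_sum, map_zero, ← Complex.real_smul, map_smul, smul_eq_mul] at hfrow
    rw [hfrow, mul_zero]

theorem quadratic_system_only_trivial_solution_general
    (n : ℕ) (A : Matrix (Fin n) (Fin n) ℝ)
    (hA : ∀ v : Fin n → ℝ, v ≠ 0 → 0 < ∑ i, ∑ j, A i j * v i * v j)
    (b : Fin n → ℂ) (hb : ∀ i, ∑ j, (A i j : ℂ) * b i * b j = 0) :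
    b = 0 := by
  have hre : (fun i => (b i).re) = 0 :=
    eq_zero_of_forall_mul_sum_eq_zero hA (map_mul_sum_eq_zero hb Complex.reLm)
  have him : (fun i => (b i).im) = 0 :=
    eq_zero_of_forall_mul_sum_eq_zero hA (map_mul_sum_eq_zero hb Complex.imLm)
  funext i
  exact Complex.ext (congrFun hre i) (congrFun him i)

/-- If `A` is an `n × n` real matrix whose associated quadratic form is positive definite,
then the system of quadratic equations `∑ j, A i j * x i * x j = 0` (`1 ≤ i ≤ n`) has only
the trivial solution in `ℂ^n`. -/
theorem quadratic_system_only_trivial_solution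
    (n : ℕ) (hn : 1 ≤ n) (A : Matrix (Fin n) (Fin n) ℝ)
    (hA : ∀ v : Fin n → ℝ, v ≠ 0 → 0 < ∑ i, ∑ j, A i j * v i * v j)
    (b : Fin n → ℂ) (hb : ∀ i, ∑ j, (A i j : ℂ) * b i * b j = 0) :
    b = 0 :=
  quadratic_system_only_trivial_solution_general n A hA b hb
end

section
/- Let n ≥ 1 and let A = (A_{ij}) be an n×n real matrix whose associated quadratic form is positive definite, i.e. Σ_{i,j} A_{ij} v_i v_j > 0 for every nonzero v ∈ ℝⁿ. Then the quadratic polynomials f_i := Σ_{j=1}^n A_{ij} x_i x_j (1 ≤ i ≤ n) form a regular sequence in the polynomial ring ℂ[x_1, …, x_n]. -/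
/-!
Write `f i = X i * ℓ i` with `ℓ i = ∑ j, A i j • X j`. If `x :: t` and `y :: t` are regular on
`M`, so is `x * y :: t`, because `0 → M/yM → M/xyM → M/xM → 0` (the first map is multiplication
by `x`) is exact and regularity passes to the middle term of a short exact sequence. Splitting the
products one at a time, it suffices that every choice of one factor from each `f i` (`X i` for
`i ∈ S`, `ℓ i` for `i ∉ S`) is a regular sequence. A real linear relation among the chosen forms
yields a vector `v` supported off `S` with `(vᵀA) j = 0` off `S`, so `vᵀAv = 0`, `v = 0`, and the
relation is trivial; as the forms have real coefficients they are also independent over `ℂ`.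
So they form a basis of the linear forms, and the linear change of coordinates sending the
variables to them is a ring automorphism, while `X 0, …, X (n-1)` is regular because
`K[X₀, …, Xₙ] ⧸ (X₀) ≅ K[X₁, …, Xₙ]`.
-/

open MvPolynomial Pointwise

section SMulTop

variable {R M : Type*} [CommRing R] [AddCommGroup M] [Module R M]

lemma Submodule.mem_smul_top_iff_exists {r : R} {m : M} :
    m ∈ (r • ⊤ : Submodule R M) ↔ ∃ m', r • m' = m := by
  simp [Submodule.mem_smul_pointwise_iff_exists]

lemma Submodule.mul_smul_top_le (x y : R) : ((x * y) • ⊤ : Submodule R M) ≤ x • ⊤ :=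
  fun _ hm => by
    obtain ⟨m, rfl⟩ := mem_smul_top_iff_exists.mp hm
    exact mem_smul_top_iff_exists.mpr ⟨y • m, (mul_smul x y m).symm⟩

namespace QuotSMulTop

noncomputable def smulMap (x y : R) : QuotSMulTop y M →ₗ[R] QuotSMulTop (x * y) M :=
  Submodule.mapQ _ _ (LinearMap.lsmul R M x) fun _ hm => by
    obtain ⟨m, rfl⟩ := Submodule.mem_smul_top_iff_exists.mp hm
    exact Submodule.mem_smul_top_iff_exists.mpr ⟨m, mul_smul x y m⟩

lemma smulMap_injective {x : R} (hx : IsSMulRegular M x) (y : R) :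
    Function.Injective (smulMap (M := M) x y) := by
  rw [← LinearMap.ker_eq_bot, LinearMap.ker_eq_bot']
  intro z hz
  obtain ⟨m, rfl⟩ := Submodule.Quotient.mk_surjective _ z
  obtain ⟨m', hm'⟩ :=
    Submodule.mem_smul_top_iff_exists.mp ((Submodule.Quotient.mk_eq_zero _).mp hz)
  rw [mul_smul] at hm'
  exact (Submodule.Quotient.mk_eq_zero _).mpr
    (Submodule.mem_smul_top_iff_exists.mpr ⟨m', hx hm'⟩)

lemma exact_smulMap_factor (x y : R) :
    Function.Exact (smulMap (M := M) x y) (Submodule.factor (Submodule.mul_smul_top_le x y)) := by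
  intro z
  constructor
  · obtain ⟨m, rfl⟩ := Submodule.Quotient.mk_surjective _ z
    intro hm
    obtain ⟨m', rfl⟩ :=
      Submodule.mem_smul_top_iff_exists.mp ((Submodule.Quotient.mk_eq_zero _).mp hm)
    exact ⟨Submodule.Quotient.mk m', rfl⟩
  · rintro ⟨w, rfl⟩
    obtain ⟨m', rfl⟩ := Submodule.Quotient.mk_surjective _ w
    exact (Submodule.Quotient.mk_eq_zero _).mpr
      (Submodule.mem_smul_top_iff_exists.mpr ⟨m', rfl⟩)

end QuotSMulTop

end SMulTop

namespace RingTheory.Sequence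

variable {R : Type*} [CommRing R]

section Exact

variable {M₁ M₂ M₃ : Type*} [AddCommGroup M₁] [AddCommGroup M₂] [AddCommGroup M₃]
  [Module R M₁] [Module R M₂] [Module R M₃] {f : M₁ →ₗ[R] M₂} {g : M₂ →ₗ[R] M₃}

lemma isWeaklyRegular_of_exact {rs : List R} (hf : Function.Injective f)
    (hfg : Function.Exact f g) (hg : Function.Surjective g) (h₁ : IsWeaklyRegular M₁ rs)
    (h₃ : IsWeaklyRegular M₃ rs) : IsWeaklyRegular M₂ rs := by
  induction rs generalizing M₁ M₂ M₃ with
  | nil => exact .nil _ _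
  | cons r rs ih =>
    rw [isWeaklyRegular_cons_iff] at h₁ h₃ ⊢
    refine ⟨isSMulRegular_of_range_eq_ker hf hfg.linearMap_ker_eq.symm h₁.1 h₃.1, ?_⟩
    have hf' : Function.Injective (QuotSMulTop.map r f) := by
      have := QuotSMulTop.map_first_exact_on_four_term_exact_of_isSMulRegular_last
        ((LinearMap.exact_zero_iff_injective PUnit f).mpr hf) hfg h₃.1
      rwa [map_zero, LinearMap.exact_zero_iff_injective] at this
    exact ih hf' (QuotSMulTop.map_exact r hfg hg) (QuotSMulTop.map_surjective r hg) h₁.2 h₃.2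

lemma isRegular_of_exact {rs : List R} (hf : Function.Injective f) (hfg : Function.Exact f g)
    (hg : Function.Surjective g) (h₁ : IsRegular M₁ rs) (h₃ : IsRegular M₃ rs) :
    IsRegular M₂ rs where
  toIsWeaklyRegular := isWeaklyRegular_of_exact hf hfg hg h₁.1 h₃.1
  top_ne_smul htop := h₃.top_ne_smul <| by
    have := congrArg (Submodule.map g) htop
    rwa [Submodule.map_smul'', Submodule.map_top, LinearMap.range_eq_top.mpr hg] at this

end Exact

section Module

variable {M : Type*} [AddCommGroup M] [Module R M]

lemma IsRegular.mul_cons {x y : R} {rs : List R} (hx : IsRegular M (x :: rs))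
    (hy : IsRegular M (y :: rs)) : IsRegular M (x * y :: rs) := by
  rw [isRegular_cons_iff] at hx hy ⊢
  exact ⟨hx.1.mul hy.1, isRegular_of_exact (QuotSMulTop.smulMap_injective hx.1 y)
    (QuotSMulTop.exact_smulMap_factor x y) (Submodule.factor_surjective _) hy.2 hx.2⟩

lemma isRegular_ofFn_mul_of_forall_ite {n : ℕ} (f g : Fin n → R)
    (h : ∀ c : Fin n → Bool, IsRegular M (List.ofFn fun i => if c i then f i else g i)) :
    IsRegular M (List.ofFn fun i => f i * g i) := by
  induction n generalizing M with
  | zero => simpa using h finZeroElim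
  | succ n ih =>
    have hcons (b : Bool) : IsRegular M
        ((if b then f 0 else g 0) :: List.ofFn fun i => f i.succ * g i.succ) := by
      have hb (c : Fin n → Bool) := by
        simpa [List.ofFn_succ] using h (Fin.cons b c)
      exact (isRegular_cons_iff _ _ _).mpr ⟨(hb fun _ => true).1, ih _ _ fun c => (hb c).2⟩
    simpa [List.ofFn_succ] using IsRegular.mul_cons (hcons true) (hcons false)

end Module

lemma isRegular_cons_of_ker_eq_span {S : Type*} [CommRing S] {φ : R →+* S}
    (hφ : Function.Surjective φ) {r : R} (hker : RingHom.ker φ = Ideal.span {r})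
    (hr : IsSMulRegular R r) {rs : List R} (h : IsRegular S (rs.map φ)) :
    IsRegular R (r :: rs) := by
  have hsmul : (r • ⊤ : Submodule R R) = RingHom.ker φ := by
    rw [hker, ← Submodule.ideal_span_singleton_smul, smul_eq_mul, Ideal.mul_top]
  let e : QuotSMulTop r R ≃+ S := (Submodule.quotEquivOfEq _ _ hsmul).toAddEquiv.trans
    (RingHom.quotientKerEquivOfSurjective hφ).toAddEquiv
  have he (a : R) : e (Submodule.Quotient.mk a) = φ a := rfl
  refine (isRegular_cons_iff _ _ _).mpr ⟨hr, (e.isRegular_congr ?_).mpr h⟩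
  refine List.forall₂_map_right_iff.mpr (List.forall₂_same.mpr fun a _ x => ?_)
  obtain ⟨b, rfl⟩ := Submodule.Quotient.mk_surjective _ x
  rw [← Submodule.Quotient.mk_smul, he, he, smul_eq_mul, map_mul, smul_eq_mul]

lemma isRegular_map_ringEquiv {S : Type*} [CommRing S] (e : R ≃+* S) {rs : List R} :
    IsRegular S (rs.map e) ↔ IsRegular R rs :=
  (e.toAddEquiv.isRegular_congr <| List.forall₂_map_right_iff.mpr <|
    List.forall₂_same.mpr fun a _ b => map_mul e a b).symm

end RingTheory.Sequence

open RingTheory.Sequence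

namespace MvPolynomial

theorem isRegular_ofFn_X {R : Type*} [CommRing R] [Nontrivial R] (n : ℕ) :
    IsRegular (MvPolynomial (Fin n) R) (List.ofFn X : List (MvPolynomial (Fin n) R)) := by
  induction n with
  | zero => simpa using IsRegular.nil _ _
  | succ n ih =>
    have hmap : (List.ofFn X).map (finSuccEquiv R n).toRingEquiv =
        Polynomial.X :: (List.ofFn X).map Polynomial.C := by
      simp [List.ofFn_succ, finSuccEquiv_X_zero, finSuccEquiv_X_succ, Function.comp_def]
    rw [← isRegular_map_ringEquiv (finSuccEquiv R n).toRingEquiv, hmap]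
    refine isRegular_cons_of_ker_eq_span Polynomial.constantCoeff_surjective
      Polynomial.ker_constantCoeff Polynomial.isRegular_X.left.isSMulRegular ?_
    simpa [List.map_map, Function.comp_def] using ih

variable {K σ τ υ : Type*} [CommSemiring K]

noncomputable def linearForm [Fintype σ] : (σ → K) →ₗ[K] MvPolynomial σ K :=
  Fintype.linearCombination K X

lemma linearForm_single [Fintype σ] [DecidableEq σ] (i : σ) :
    linearForm (Pi.single i 1 : σ → K) = X i := by
  simp [linearForm]

noncomputable def linearSubst [DecidableEq σ] [Fintype τ] (T : (σ → K) →ₗ[K] (τ → K)) :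
    MvPolynomial σ K →ₐ[K] MvPolynomial τ K :=
  aeval fun i => linearForm (T (Pi.single i 1))

lemma linearSubst_X [DecidableEq σ] [Fintype τ] (T : (σ → K) →ₗ[K] (τ → K)) (i : σ) :
    linearSubst T (X i) = linearForm (T (Pi.single i 1)) :=
  aeval_X _ _

lemma linearSubst_linearForm [Fintype σ] [DecidableEq σ] [Fintype τ]
    (T : (σ → K) →ₗ[K] (τ → K)) (v : σ → K) :
    linearSubst T (linearForm v) = linearForm (T v) := by
  suffices (linearSubst T).toLinearMap ∘ₗ linearForm = linearForm ∘ₗ T from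
    LinearMap.congr_fun this v
  refine (Pi.basisFun K σ).ext fun i => ?_
  simp [linearForm_single, linearSubst_X]

lemma linearSubst_comp [DecidableEq σ] [Fintype τ] [DecidableEq τ] [Fintype υ]
    (S : (τ → K) →ₗ[K] (υ → K)) (T : (σ → K) →ₗ[K] (τ → K)) :
    (linearSubst S).comp (linearSubst T) = linearSubst (S ∘ₗ T) :=
  algHom_ext fun i => by
    rw [AlgHom.comp_apply, linearSubst_X, linearSubst_X, linearSubst_linearForm,
      LinearMap.comp_apply]

lemma linearSubst_id [Fintype σ] [DecidableEq σ] :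
    linearSubst (LinearMap.id : (σ → K) →ₗ[K] (σ → K)) = AlgHom.id K _ :=
  algHom_ext fun i => by simp [linearSubst_X, linearForm_single]

noncomputable def linearSubstEquiv [Fintype σ] [DecidableEq σ] [Fintype τ] [DecidableEq τ]
    (e : (σ → K) ≃ₗ[K] (τ → K)) : MvPolynomial σ K ≃ₐ[K] MvPolynomial τ K :=
  AlgEquiv.ofAlgHom (linearSubst e) (linearSubst e.symm)
    (by rw [linearSubst_comp, LinearEquiv.comp_coe, e.symm_trans_self]; exact linearSubst_id)
    (by rw [linearSubst_comp, LinearEquiv.comp_coe, e.self_trans_symm]; exact linearSubst_id)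

theorem isRegular_ofFn_linearForm {F : Type*} [Field F] {n : ℕ} {v : Fin n → Fin n → F}
    (hv : LinearIndependent F v) :
    IsRegular (MvPolynomial (Fin n) F) (List.ofFn fun i => linearForm (v i)) := by
  let b := basisOfLinearIndependentOfCardEqFinrank' v hv (by simp)
  have hmap : (List.ofFn X).map (linearSubstEquiv b.equivFun.symm).toRingEquiv =
      List.ofFn fun i => linearForm (v i) := by
    simp [List.map_ofFn, Function.comp_def, linearSubstEquiv, linearSubst_X, b]
  rw [← hmap, isRegular_map_ringEquiv]
  exact isRegular_ofFn_X n

end MvPolynomial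

lemma linearIndependent_ite_single_of_anisotropic {K ι : Type*} [CommRing K] [Fintype ι]
    [DecidableEq ι] (A : Matrix ι ι K)
    (hA : ∀ v : ι → K, v ≠ 0 → ∑ i, ∑ j, A i j * v i * v j ≠ 0) (c : ι → Bool) :
    LinearIndependent K fun i => if c i then Pi.single i 1 else A i := by
  rw [Fintype.linearIndependent_iff]
  intro g hg
  set v : ι → K := fun i => if c i then 0 else g i
  have hcoord (j : ι) : (if c j then g j else 0) + ∑ i, v i * A i j = 0 := by
    have := congrFun hg j
    simp only [Finset.sum_apply, Pi.smul_apply, smul_eq_mul, Pi.zero_apply] at this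
    have hterm (i : ι) : g i * (if c i then Pi.single i 1 else A i) j =
        (Pi.single j (if c j then g j else 0) : ι → K) i + v i * A i j := by
      by_cases hi : i = j
      · subst hi; by_cases hc : c i <;> simp [v, hc]
      · by_cases hc : c i <;> simp [v, hc, hi]
    rwa [Finset.sum_congr rfl fun i _ => hterm i, Finset.sum_add_distrib, Finset.sum_pi_single',
      if_pos (Finset.mem_univ j)] at this
  have hv : v = 0 := by
    by_contra hv
    refine hA v hv (Finset.sum_comm.trans (Finset.sum_eq_zero fun j _ => ?_))
    by_cases hc : c j
    · simp [v, hc]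
    · calc ∑ i, A i j * v i * v j = (∑ i, v i * A i j) * v j := by
            rw [Finset.sum_mul]; exact Finset.sum_congr rfl fun i _ => by ring
        _ = 0 := by rw [show ∑ i, v i * A i j = 0 by simpa [hc] using hcoord j, zero_mul]
  intro i
  by_cases hc : c i
  · simpa [hv, hc] using hcoord i
  · simpa [v, hc] using congrFun hv i

theorem quadrics_isRegular_sequence_general
    (n : ℕ) (A : Matrix (Fin n) (Fin n) ℝ)
    (hA : ∀ v : Fin n → ℝ, v ≠ 0 → 0 < ∑ i, ∑ j, A i j * v i * v j) :
    RingTheory.Sequence.IsRegular (MvPolynomial (Fin n) ℂ)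
      (List.ofFn fun i : Fin n => ∑ j, C (A i j : ℂ) * X i * X j) := by
  have hquad (i : Fin n) :
      ∑ j, C (A i j : ℂ) * X i * X j = X i * linearForm fun j => (A i j : ℂ) := by
    simp only [linearForm, Fintype.linearCombination_apply, smul_eq_C_mul, Finset.mul_sum]
    exact Finset.sum_congr rfl fun j _ => by ring
  simp only [hquad]
  refine isRegular_ofFn_mul_of_forall_ite _ _ fun c => ?_
  have hchoice (i : Fin n) : (if c i then X i else linearForm fun j => (A i j : ℂ)) =
      linearForm (algebraMap ℝ ℂ ∘ if c i then Pi.single i 1 else A i) := by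
    by_cases hc : c i
    · rw [if_pos hc, if_pos hc, ← linearForm_single]
      exact congrArg linearForm (funext fun j => by simp [Pi.single_apply, apply_ite])
    · simp only [hc]; rfl
  simp only [hchoice]
  exact isRegular_ofFn_linearForm (linearIndependent_algebraMap_comp_iff.mpr
    (linearIndependent_ite_single_of_anisotropic A (fun v hv => (hA v hv).ne') c))

/-- If `A` is an `n × n` real matrix whose associated quadratic form is positive definite,
then the quadratic polynomials `f i = ∑ j, A i j * x i * x j` form a regular sequence in
`ℂ[x_1, …, x_n]`. -/
theorem quadrics_isRegular_sequence
    (n : ℕ) (hn : 1 ≤ n) (A : Matrix (Fin n) (Fin n) ℝ)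
    (hA : ∀ v : Fin n → ℝ, v ≠ 0 → 0 < ∑ i, ∑ j, A i j * v i * v j) :
    RingTheory.Sequence.IsRegular (MvPolynomial (Fin n) ℂ)
      (List.ofFn fun i : Fin n => ∑ j, C (A i j : ℂ) * X i * X j) :=
  quadrics_isRegular_sequence_general n A hA
end

section
/- Let n ≥ 1 and let A = (A_{ij}) be an n×n real matrix whose associated quadratic form is positive definite, i.e. Σ_{i,j} A_{ij} v_i v_j > 0 for every nonzero v ∈ ℝⁿ. Let J̌ denote the ideal of ℂ[x_1, …, x_n] generated by the quadratic polynomials f_i := Σ_{j=1}^n A_{ij} x_i x_j (1 ≤ i ≤ n). Then the quotient ring ℂ[x_1, …, x_n]/J̌ has dimension 2^n as a ℂ-vector space. -/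
/-!
Write `f i = X i * ℓ i` with `ℓ i = ∑ j, A i j • X j`. The quadrics form a regular sequence in
every order, by induction on the number of variables: `f c` is regular modulo `(f i : i ∈ T)` as
soon as both `X c` and `ℓ c` are. A linear form `ℓ = ∑ j, a j • X j` with `a c ≠ 0` is killed by
the substitution `X c ↦ -(a c)⁻¹ ∑_{j ≠ c} a j • X j`, which turns each `f i`, `i ≠ c`, into the
quadric of a smaller matrix: the submatrix of `A` when `ℓ = X c`, the Schur complement of `A c c`
when `ℓ = ℓ c`. Both are again positive definite, so their quadrics form a regular sequence by
induction. Since `ℓ` stays regular modulo `I + (g)` when it is regular modulo `I` and `g` is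
regular modulo `I + (ℓ)`, adding the `f i` one at a time makes `ℓ` regular modulo `(f i : i ∈ T)`.

For the dimension, let `V_I(d)` be the image in `K[X] ⧸ I` of the polynomials of degree `≤ d`. If
`I` is homogeneous and the quadric `f` is regular modulo `I`, multiplication by `f` identifies
`V_I(d)` with the kernel of `V_I(d + 2) → V_{I + (f)}(d + 2)`. This is the recursion satisfied by
the number of monomials of degree `≤ d` that are squarefree in the variables used so far; for
`I = (f_1, …, f_n)` and `d ≥ n` it gives `2 ^ n`, so the increasing `V_I(d)` stabilise there and
exhaust the quotient.
-/

open MvPolynomial Module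

namespace QuadricQuotient

attribute [local instance] MvPolynomial.gradedAlgebra

section RegularElements

variable {R S : Type*} [CommRing R] [CommRing S]

theorem isSMulRegular_quotient_iff {I : Ideal R} {a : R} :
    IsSMulRegular (R ⧸ I) a ↔ ∀ g, a * g ∈ I → g ∈ I :=
  isSMulRegular_quotient_iff_mem_of_smul_mem I a

theorem IsSMulRegular.quotient_span_singleton_sup {I : Ideal R} {a b : R}
    (ha : IsSMulRegular (R ⧸ I) a) (hb : IsSMulRegular (R ⧸ (Ideal.span {a} ⊔ I)) b) :
    IsSMulRegular (R ⧸ (Ideal.span {b} ⊔ I)) a := by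
  rw [isSMulRegular_quotient_iff] at *
  intro g hg
  obtain ⟨h, p, hp, hbhp⟩ := Ideal.mem_span_singleton_sup.1 hg
  have hbh : b * h ∈ Ideal.span {a} ⊔ I :=
    Ideal.mem_span_singleton_sup.2 ⟨g, -p, neg_mem hp, by linear_combination -hbhp⟩
  obtain ⟨h', p', hp', hah'p'⟩ := Ideal.mem_span_singleton_sup.1 (hb h hbh)
  have hg' : g - h' * b ∈ I := ha _ <| by
    rw [show a * (g - h' * b) = p + b * p' by linear_combination -hbhp - b * hah'p']
    exact add_mem hp (I.mul_mem_left b hp')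
  exact Ideal.mem_span_singleton_sup.2 ⟨h', _, hg', by ring⟩

theorem IsSMulRegular.of_quotient_comap (π : R →+* S) {J : Ideal S} {a : R}
    (h : IsSMulRegular (S ⧸ J) (π a)) : IsSMulRegular (R ⧸ J.comap π) a := by
  rw [isSMulRegular_quotient_iff] at *
  exact fun g hg => h (π g) (by simpa using hg)

def IsRegularInAnyOrder {ι : Type*} (f : ι → R) : Prop :=
  ∀ (T : Finset ι) (i : ι), i ∉ T → IsSMulRegular (R ⧸ Ideal.span (f '' T)) (f i)

end RegularElements

section Quadrics

variable {K ι : Type*} [Field K]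

noncomputable def linearForm [Fintype ι] (a : ι → K) : MvPolynomial ι K :=
  ∑ j, C (a j) * X j

noncomputable def quadric [Fintype ι] (A : Matrix ι ι K) (i : ι) : MvPolynomial ι K :=
  ∑ j, C (A i j) * X i * X j

-- For `a = A c` this is the Schur complement of `A c c`; for `a = Pi.single c 1` it is the
-- submatrix obtained by deleting row and column `c`.
def eliminate (A : Matrix ι ι K) (a : ι → K) (c : ι) : Matrix {i // i ≠ c} {i // i ≠ c} K :=
  fun i j => A i j - A i c * a j / a c

theorem eliminate_map {L : Type*} [Field L] (f : K →+* L) (A : Matrix ι ι K) (a : ι → K)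
    (c : ι) : (eliminate A a c).map f = eliminate (A.map f) (f ∘ a) c := by
  ext i j
  simp [eliminate]

variable [Fintype ι]

theorem quadric_eq_X_mul_linearForm (A : Matrix ι ι K) (i : ι) :
    quadric A i = X i * linearForm (A i) := by
  simp only [quadric, linearForm, Finset.mul_sum]
  exact Finset.sum_congr rfl fun j _ => by ring

theorem isHomogeneous_linearForm (a : ι → K) : (linearForm a).IsHomogeneous 1 :=
  IsHomogeneous.sum _ _ _ fun j _ => isHomogeneous_C_mul_X (a j) j

theorem isHomogeneous_quadric (A : Matrix ι ι K) (i : ι) : (quadric A i).IsHomogeneous 2 := by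
  rw [quadric_eq_X_mul_linearForm]
  exact (isHomogeneous_X K i).mul (isHomogeneous_linearForm _)

theorem linearForm_ne_zero {a : ι → K} {c : ι} (ha : a c ≠ 0) : linearForm a ≠ 0 := by
  classical
  intro h
  have hcoeff : coeff (Finsupp.single c 1) (linearForm a) = a c := by
    simp [linearForm, coeff_sum, coeff_C_mul, coeff_X, Finsupp.single_eq_single_iff]
  exact ha (by rw [← hcoeff, h, coeff_zero])

theorem linearForm_single [DecidableEq ι] (c : ι) : linearForm (Pi.single c (1 : K)) = X c := by
  simp [linearForm, Pi.single_apply]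

end Quadrics

section Elimination

variable {K ι κ : Type*} [Field K] [Fintype ι] [DecidableEq ι]

noncomputable def elimVar (a : ι → K) (c : ι) :
    MvPolynomial ι K →ₐ[K] MvPolynomial {i // i ≠ c} K :=
  aeval fun i => if h : i = c then -C (a c)⁻¹ * ∑ j : {i // i ≠ c}, C (a j) * X j else X ⟨i, h⟩

variable {a : ι → K} {c : ι}

theorem elimVar_X_self : elimVar a c (X c) = -C (a c)⁻¹ * ∑ j : {i // i ≠ c}, C (a j) * X j := by
  simp [elimVar]

theorem elimVar_X_of_ne {i : ι} (h : i ≠ c) : elimVar a c (X i) = X ⟨i, h⟩ := by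
  simp [elimVar, h]

theorem elimVar_rename (p : MvPolynomial {i // i ≠ c} K) :
    elimVar a c (rename Subtype.val p) = p := by
  rw [← AlgHom.comp_apply, show (elimVar a c).comp (rename Subtype.val) = AlgHom.id K _ from
    algHom_ext fun i => by simp [elimVar_X_of_ne i.2], AlgHom.id_apply]

theorem linearForm_eq_add_sum_ne (a : ι → K) (c : ι) :
    linearForm a = C (a c) * X c + ∑ j : {i // i ≠ c}, C (a j) * X (j : ι) :=
  Fintype.sum_eq_add_sum_subtype_ne _ c

theorem elimVar_linearForm (b : ι → K) :
    elimVar a c (linearForm b) = linearForm fun j : {i // i ≠ c} => b j - b c * a j / a c := by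
  simp only [linearForm_eq_add_sum_ne b c, map_add, map_mul, map_sum, algHom_C, elimVar_X_self,
    fun j : {i // i ≠ c} => elimVar_X_of_ne (a := a) j.2, algebraMap_eq]
  simp only [linearForm, div_eq_mul_inv, map_sub, map_mul, sub_mul, Finset.sum_sub_distrib,
    Finset.mul_sum]
  rw [add_comm, sub_eq_add_neg, ← Finset.sum_neg_distrib]
  congr 1
  exact Finset.sum_congr rfl fun j _ => by ring

theorem elimVar_linearForm_self (ha : a c ≠ 0) : elimVar a c (linearForm a) = 0 := by
  rw [elimVar_linearForm a]
  simp [mul_div_cancel_left₀ _ ha, linearForm]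

theorem mkₐ_comp_rename_comp_elimVar (ha : a c ≠ 0) :
    (Ideal.Quotient.mkₐ K (Ideal.span {linearForm a})).comp
      ((rename Subtype.val).comp (elimVar a c)) = Ideal.Quotient.mkₐ K _ := by
  refine algHom_ext fun i => ?_
  by_cases hi : i = c
  · subst hi
    rw [AlgHom.comp_apply, AlgHom.comp_apply, elimVar_X_self, Ideal.Quotient.mkₐ_eq_mk,
      Ideal.Quotient.eq, Ideal.mem_span_singleton']
    refine ⟨-C (a i)⁻¹, ?_⟩
    have hinv : C (a i)⁻¹ * C (a i) = (1 : MvPolynomial ι K) := by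
      rw [← map_mul, inv_mul_cancel₀ ha, map_one]
    simp only [linearForm_eq_add_sum_ne a i, map_mul, map_neg, map_sum, rename_C, rename_X]
    linear_combination (-X i) * hinv
  · simp [elimVar_X_of_ne hi]

theorem ker_elimVar (ha : a c ≠ 0) : RingHom.ker (elimVar a c) = Ideal.span {linearForm a} := by
  refine le_antisymm (fun p hp => ?_)
    ((Ideal.span_singleton_le_iff_mem _).2 (elimVar_linearForm_self ha))
  have := AlgHom.congr_fun (mkₐ_comp_rename_comp_elimVar ha) p
  rwa [AlgHom.comp_apply, AlgHom.comp_apply, (RingHom.mem_ker).1 hp, map_zero, map_zero, eq_comm,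
    Ideal.Quotient.mkₐ_eq_mk, Ideal.Quotient.eq_zero_iff_mem] at this

theorem IsSMulRegular.of_elimVar (ha : a c ≠ 0) {F : Set (MvPolynomial ι K)}
    {g : MvPolynomial ι K}
    (h : IsSMulRegular (MvPolynomial {i // i ≠ c} K ⧸ Ideal.span (elimVar a c '' F))
      (elimVar a c g)) :
    IsSMulRegular (MvPolynomial ι K ⧸ (Ideal.span {linearForm a} ⊔ Ideal.span F)) g := by
  have hsurj : Function.Surjective (elimVar a c) := fun p => ⟨_, elimVar_rename p⟩
  have hJ : Ideal.span {linearForm a} ⊔ Ideal.span F =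
      (Ideal.span (elimVar a c '' F)).comap (elimVar a c) := by
    rw [← Ideal.map_span, Ideal.comap_map_of_surjective' _ hsurj, sup_comm, ker_elimVar ha]
  rw [hJ]
  exact IsSMulRegular.of_quotient_comap (elimVar a c).toRingHom h

theorem isSMulRegular_linearForm_quotient_span (ha : a c ≠ 0) (G : κ → MvPolynomial ι K)
    (hG : IsRegularInAnyOrder (elimVar a c ∘ G)) (T : Finset κ) :
    IsSMulRegular (MvPolynomial ι K ⧸ Ideal.span (G '' T)) (linearForm a) := by
  classical
  induction T using Finset.induction_on with
  | empty =>
    rw [Finset.coe_empty, Set.image_empty, Ideal.span_empty, isSMulRegular_quotient_iff]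
    intro g hg
    rw [Ideal.mem_bot] at *
    exact (mul_eq_zero.1 hg).resolve_left (linearForm_ne_zero ha)
  | insert s T hs ih =>
    have hGs := hG T s hs
    rw [Function.comp_apply, Set.image_comp] at hGs
    rw [Finset.coe_insert, Set.image_insert_eq, Ideal.span_insert]
    exact IsSMulRegular.quotient_span_singleton_sup ih (IsSMulRegular.of_elimVar ha hGs)

theorem elimVar_quadric (A : Matrix ι ι K) (i : {i // i ≠ c}) :
    elimVar a c (quadric A i) = quadric (eliminate A a c) i := by
  rw [quadric_eq_X_mul_linearForm, quadric_eq_X_mul_linearForm, map_mul, elimVar_X_of_ne i.2,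
    elimVar_linearForm]
  rfl

theorem isSMulRegular_linearForm_quotient_quadric {A : Matrix ι ι K} (ha : a c ≠ 0)
    (hreg : IsRegularInAnyOrder (quadric (eliminate A a c))) {T : Finset ι} (hcT : c ∉ T) :
    IsSMulRegular (MvPolynomial ι K ⧸ Ideal.span (quadric A '' T)) (linearForm a) := by
  have hG : elimVar a c ∘ (quadric A ∘ Subtype.val) = quadric (eliminate A a c) :=
    funext (elimVar_quadric A)
  have hT : quadric A ∘ Subtype.val '' (T.subtype (· ≠ c) : Set {i // i ≠ c}) =
      quadric A '' T := by
    ext p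
    simp only [Set.mem_image, Finset.mem_coe, Finset.mem_subtype, Function.comp_apply,
      Subtype.exists]
    exact ⟨fun ⟨i, _, hi, hp⟩ => ⟨i, hi, hp⟩,
      fun ⟨i, hi, hp⟩ => ⟨i, ne_of_mem_of_not_mem hi hcT, hi, hp⟩⟩
  rw [← hT]
  exact isSMulRegular_linearForm_quotient_span ha _ (hG ▸ hreg) _

end Elimination

section PosDef

variable {ι : Type*} [Fintype ι] [DecidableEq ι]

def PosDefQuadForm (A : Matrix ι ι ℝ) : Prop :=
  ∀ v : ι → ℝ, v ≠ 0 → 0 < ∑ i, ∑ j, A i j * v i * v j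

theorem sum_sum_extend (A : Matrix ι ι ℝ) (c : ι) (v : {i // i ≠ c} → ℝ) (x : ℝ) :
    let w : ι → ℝ := fun i => if h : i = c then x else v ⟨i, h⟩
    ∑ i, ∑ j, A i j * w i * w j = ∑ i : {i // i ≠ c}, ∑ j : {i // i ≠ c}, A i j * v i * v j +
      x * (∑ j : {i // i ≠ c}, A c j * v j + ∑ i : {i // i ≠ c}, A i c * v i) + A c c * x ^ 2 := by
  intro w
  have hwc : w c = x := dif_pos rfl
  have hw (i : {i // i ≠ c}) : w i = v i := dif_neg i.2
  simp only [Fintype.sum_eq_add_sum_subtype_ne _ c, hwc, hw, Finset.sum_add_distrib]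
  rw [mul_add, Finset.mul_sum, Finset.mul_sum]
  ring_nf

namespace PosDefQuadForm

variable {A : Matrix ι ι ℝ}

theorem diag_pos (hA : PosDefQuadForm A) (c : ι) : 0 < A c c := by
  simpa [Pi.single_apply] using hA (Pi.single c 1) (by simp)

theorem add_mul_add_pos (hA : PosDefQuadForm A) {c : ι} {v : {i // i ≠ c} → ℝ} (hv : v ≠ 0)
    (x : ℝ) : 0 < ∑ i : {i // i ≠ c}, ∑ j : {i // i ≠ c}, A i j * v i * v j +
      x * (∑ j : {i // i ≠ c}, A c j * v j + ∑ i : {i // i ≠ c}, A i c * v i) + A c c * x ^ 2 := by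
  rw [← sum_sum_extend]
  refine hA _ fun hw => hv (funext fun i => ?_)
  simpa [i.2] using congrFun hw i

theorem eliminate_single (hA : PosDefQuadForm A) (c : ι) :
    PosDefQuadForm (eliminate A (Pi.single c 1) c) := by
  intro v hv
  have hsingle (j : {i // i ≠ c}) : (Pi.single c 1 : ι → ℝ) j = 0 := by simp [j.2]
  simpa [eliminate, hsingle] using hA.add_mul_add_pos hv 0

theorem eliminate_self (hA : PosDefQuadForm A) (c : ι) :
    PosDefQuadForm (eliminate A (A c) c) := by
  intro v hv
  have hc := (hA.diag_pos c).ne'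
  convert hA.add_mul_add_pos hv (-(∑ j : {i // i ≠ c}, A c j * v j) / A c c) using 1
  have hprod : ∑ i : {i // i ≠ c}, ∑ j : {i // i ≠ c}, A i c * A c j / A c c * v i * v j =
      (∑ i : {i // i ≠ c}, A i c * v i) * (∑ j : {i // i ≠ c}, A c j * v j) / A c c := by
    simp only [Finset.sum_mul_sum, Finset.sum_div]
    exact Finset.sum_congr rfl fun i _ => Finset.sum_congr rfl fun j _ => by ring
  simp only [eliminate, sub_mul, Finset.sum_sub_distrib, hprod]
  field_simp
  ring

end PosDefQuadForm

theorem isRegularInAnyOrder_quadric_of_posDefQuadForm (A : Matrix ι ι ℝ)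
    (hA : PosDefQuadForm A) : IsRegularInAnyOrder (quadric (A.map Complex.ofRealHom)) := by
  induction hn : Fintype.card ι using Nat.strong_induction_on generalizing ι with
  | _ n ih =>
  intro T c hcT
  have hcard : Fintype.card {i // i ≠ c} < n :=
    hn ▸ Fintype.card_subtype_lt (p := (· ≠ c)) (x := c) (by simp)
  have regular_linearForm (b : ι → ℝ) (hbc : b c ≠ 0) (hB : PosDefQuadForm (eliminate A b c)) :
      IsSMulRegular (MvPolynomial ι ℂ ⧸ Ideal.span (quadric (A.map Complex.ofRealHom) '' T))
        (linearForm (Complex.ofRealHom ∘ b)) :=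
    isSMulRegular_linearForm_quotient_quadric (by simpa using hbc)
      (eliminate_map Complex.ofRealHom A b c ▸ ih _ hcard _ hB rfl) hcT
  have hsingle : Complex.ofRealHom ∘ Pi.single c 1 = Pi.single c 1 := by
    ext j
    by_cases hj : j = c <;> simp [hj]
  rw [quadric_eq_X_mul_linearForm, ← linearForm_single, ← hsingle]
  exact (regular_linearForm _ (by simp) (hA.eliminate_single c)).mul
    (regular_linearForm _ (hA.diag_pos c).ne' (hA.eliminate_self c))

end PosDef

section Filtration

variable {R σ : Type*} [CommRing R] {e m : ℕ}

theorem coe_decompose_homogeneousSubmodule (p : MvPolynomial σ R) (n : ℕ) :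
    (DirectSum.decompose (homogeneousSubmodule σ R) p n : MvPolynomial σ R) =
      homogeneousComponent n p :=
  decomposition.decompose'_apply p n

theorem homogeneousComponent_mul_of_le {f : MvPolynomial σ R} (hf : f.IsHomogeneous e)
    (h : e ≤ m) (p : MvPolynomial σ R) :
    homogeneousComponent m (f * p) = f * homogeneousComponent (m - e) p := by
  simpa only [coe_decompose_homogeneousSubmodule] using
    DirectSum.coe_decompose_mul_of_left_mem_of_le (homogeneousSubmodule σ R) (b := p)
      ((mem_homogeneousSubmodule e f).2 hf) h

theorem homogeneousComponent_mul_of_lt {f : MvPolynomial σ R} (hf : f.IsHomogeneous e)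
    (h : m < e) (p : MvPolynomial σ R) : homogeneousComponent m (f * p) = 0 := by
  simpa only [coe_decompose_homogeneousSubmodule] using
    DirectSum.coe_decompose_mul_of_left_mem_of_not_le (homogeneousSubmodule σ R) (b := p)
      ((mem_homogeneousSubmodule e f).2 hf) (not_le.2 h)

variable {K : Type*} [Field K]

noncomputable def quotDegreeLE (I : Ideal (MvPolynomial σ K)) (d : ℕ) :
    Submodule K (MvPolynomial σ K ⧸ I) :=
  (restrictTotalDegree σ K d).map (Ideal.Quotient.mkₐ K I).toLinearMap

variable {I J : Ideal (MvPolynomial σ K)} {f : MvPolynomial σ K} {d : ℕ}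

theorem mem_quotDegreeLE {q : MvPolynomial σ K ⧸ I} :
    q ∈ quotDegreeLE I d ↔ ∃ g : MvPolynomial σ K, g.totalDegree ≤ d ∧ Ideal.Quotient.mk I g = q :=
  by simp [quotDegreeLE, mem_restrictTotalDegree]

theorem quotDegreeLE_mono (I : Ideal (MvPolynomial σ K)) : Monotone (quotDegreeLE I) :=
  fun _ _ h => Submodule.map_mono fun _ hg => by
    rw [mem_restrictTotalDegree] at *
    exact hg.trans h

theorem finrank_quotDegreeLE_bot (d : ℕ) :
    finrank K (quotDegreeLE (⊥ : Ideal (MvPolynomial σ K)) d) =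
      finrank K (restrictTotalDegree σ K d) :=
  (LinearEquiv.finrank_eq (Submodule.equivMapOfInjective _
    (RingEquiv.quotientBot (MvPolynomial σ K)).symm.injective _)).symm

theorem quotDegreeLE_inf_ker_factorₐ_eq_bot (hI : I.IsHomogeneous (homogeneousSubmodule σ K))
    (hf : f.IsHomogeneous e) (hd : d < e) :
    quotDegreeLE I d ⊓ LinearMap.ker
      (Ideal.Quotient.factorₐ K (le_sup_right : I ≤ Ideal.span {f} ⊔ I)).toLinearMap = ⊥ := by
  refine eq_bot_iff.2 fun q ⟨hq, hker⟩ => ?_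
  obtain ⟨g, hg, rfl⟩ := mem_quotDegreeLE.1 hq
  obtain ⟨h, p, hp, rfl⟩ := Ideal.mem_span_singleton_sup.1 (Ideal.Quotient.eq_zero_iff_mem.1 hker)
  refine (Submodule.mem_bot K).2 (Ideal.Quotient.eq_zero_iff_mem.2 ?_)
  refine (mem_iff_homogeneousComponent_mem hI _).2 fun m => ?_
  rcases lt_or_ge m e with hm | hm
  · rw [map_add, mul_comm, homogeneousComponent_mul_of_lt hf hm, zero_add]
    exact homogeneousComponent_mem_of_mem hI hp m
  · rw [homogeneousComponent_eq_zero _ _ (by omega)]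
    exact zero_mem I

theorem quotDegreeLE_add_inf_ker_factorₐ (hI : I.IsHomogeneous (homogeneousSubmodule σ K))
    (hf : f.IsHomogeneous e) (d : ℕ) :
    quotDegreeLE I (d + e) ⊓ LinearMap.ker
      (Ideal.Quotient.factorₐ K (le_sup_right : I ≤ Ideal.span {f} ⊔ I)).toLinearMap =
      (quotDegreeLE I d).map (LinearMap.mulLeft K (Ideal.Quotient.mk I f)) := by
  apply le_antisymm
  · rintro q ⟨hq, hker⟩
    obtain ⟨g, hg, rfl⟩ := mem_quotDegreeLE.1 hq
    obtain ⟨h, p, hp, hgp⟩ :=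
      Ideal.mem_span_singleton_sup.1 (Ideal.Quotient.eq_zero_iff_mem.1 hker)
    rw [← sum_homogeneousComponent g, map_sum]
    refine Submodule.sum_mem _ fun m hm => ?_
    have hcomp : homogeneousComponent m g =
        homogeneousComponent m (f * h) + homogeneousComponent m p := by
      rw [← hgp, map_add, mul_comm]
    rcases lt_or_ge m e with hme | hme
    · rw [hcomp, homogeneousComponent_mul_of_lt hf hme, zero_add,
        Ideal.Quotient.eq_zero_iff_mem.2 (homogeneousComponent_mem_of_mem hI hp m)]
      exact zero_mem _
    · refine ⟨Ideal.Quotient.mk I (homogeneousComponent (m - e) h),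
        mem_quotDegreeLE.2 ⟨_, ?_, rfl⟩, ?_⟩
      · have := Finset.mem_range.1 hm
        exact (homogeneousComponent_isHomogeneous _ h).totalDegree_le.trans (by omega)
      · rw [LinearMap.mulLeft_apply, ← map_mul, Ideal.Quotient.eq, hcomp,
          homogeneousComponent_mul_of_le hf hme, sub_add_cancel_left]
        exact neg_mem (homogeneousComponent_mem_of_mem hI hp m)
  · rintro _ ⟨_, hq, rfl⟩
    obtain ⟨h, hh, rfl⟩ := mem_quotDegreeLE.1 hq
    refine ⟨mem_quotDegreeLE.2 ⟨f * h, ?_, rfl⟩, ?_⟩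
    · exact (totalDegree_mul f h).trans (by have := hf.totalDegree_le; omega)
    · exact Ideal.Quotient.eq_zero_iff_mem.2
        (Ideal.mem_sup_left (Ideal.mul_mem_right _ _ (Ideal.mem_span_singleton_self f)))

variable [Finite σ]

instance (I : Ideal (MvPolynomial σ K)) (d : ℕ) : FiniteDimensional K (quotDegreeLE I d) :=
  Module.Finite.map _ _

theorem finrank_quotDegreeLE_add_finrank_inf_ker (hIJ : I ≤ J) (d : ℕ) :
    finrank K (quotDegreeLE J d) + finrank K (quotDegreeLE I d ⊓
      LinearMap.ker (Ideal.Quotient.factorₐ K hIJ).toLinearMap : Submodule K _) =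
      finrank K (quotDegreeLE I d) := by
  set L := (Ideal.Quotient.factorₐ K hIJ).toLinearMap.domRestrict (quotDegreeLE I d)
  have hrange : LinearMap.range L = quotDegreeLE J d := by
    rw [LinearMap.range_domRestrict, quotDegreeLE, quotDegreeLE, ← Submodule.map_comp]
    rfl
  have hker : finrank K (LinearMap.ker L) = finrank K (quotDegreeLE I d ⊓
      LinearMap.ker (Ideal.Quotient.factorₐ K hIJ).toLinearMap : Submodule K _) := by
    rw [← Submodule.finrank_map_subtype_eq, LinearMap.ker_domRestrict, Submodule.map_comap_subtype]
  rw [← hrange, ← hker]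
  exact L.finrank_range_add_finrank_ker

theorem finrank_quotDegreeLE_span_singleton_sup_of_lt
    (hI : I.IsHomogeneous (homogeneousSubmodule σ K)) (hf : f.IsHomogeneous e) (hd : d < e) :
    finrank K (quotDegreeLE (Ideal.span {f} ⊔ I) d) = finrank K (quotDegreeLE I d) := by
  have := finrank_quotDegreeLE_add_finrank_inf_ker (le_sup_right : I ≤ Ideal.span {f} ⊔ I) d
  rwa [quotDegreeLE_inf_ker_factorₐ_eq_bot hI hf hd, finrank_bot, add_zero] at this

theorem finrank_quotDegreeLE_span_singleton_sup_add
    (hI : I.IsHomogeneous (homogeneousSubmodule σ K)) (hf : f.IsHomogeneous e)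
    (hreg : IsSMulRegular (MvPolynomial σ K ⧸ I) f) (d : ℕ) :
    finrank K (quotDegreeLE (Ideal.span {f} ⊔ I) (d + e)) + finrank K (quotDegreeLE I d) =
      finrank K (quotDegreeLE I (d + e)) := by
  have hinj : Function.Injective (LinearMap.mulLeft K (Ideal.Quotient.mk I f)) := hreg
  have := finrank_quotDegreeLE_add_finrank_inf_ker (le_sup_right : I ≤ Ideal.span {f} ⊔ I) (d + e)
  rwa [quotDegreeLE_add_inf_ker_factorₐ hI hf,
    ← (Submodule.equivMapOfInjective _ hinj _).finrank_eq] at this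

theorem finrank_quotient_eq_of_finrank_quotDegreeLE {N d₀ : ℕ}
    (h : ∀ d, d₀ ≤ d → finrank K (quotDegreeLE I d) = N) :
    finrank K (MvPolynomial σ K ⧸ I) = N := by
  have hstab (d : ℕ) (hd : d₀ ≤ d) : quotDegreeLE I d = quotDegreeLE I d₀ :=
    (Submodule.eq_of_le_of_finrank_le (quotDegreeLE_mono I hd) (by rw [h d hd, h d₀ le_rfl])).symm
  have htop : quotDegreeLE I d₀ = ⊤ := by
    refine eq_top_iff.2 fun q _ => ?_
    obtain ⟨g, rfl⟩ := Ideal.Quotient.mk_surjective q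
    rw [← hstab _ (le_max_left d₀ g.totalDegree)]
    exact mem_quotDegreeLE.2 ⟨g, le_max_right _ _, rfl⟩
  rw [← finrank_top, ← htop, h d₀ le_rfl]

end Filtration

section Counting

variable {σ : Type*}

-- The monomials of degree `≤ d` outside `(X i ^ 2 : i ∈ T)`: the count for the identity matrix.
def squarefreeOnDegreeLE (T : Finset σ) (d : ℕ) : Set (σ →₀ ℕ) :=
  {s | s.degree ≤ d ∧ ∀ i ∈ T, s i ≤ 1}

theorem squarefreeOnDegreeLE_insert_of_lt_two [DecidableEq σ] (T : Finset σ) (c : σ) {d : ℕ}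
    (hd : d < 2) :
    squarefreeOnDegreeLE (insert c T) d = squarefreeOnDegreeLE T d := by
  ext s
  simp only [squarefreeOnDegreeLE, Set.mem_ofPred_eq, Finset.forall_mem_insert,
    and_congr_right_iff]
  exact fun hs => and_iff_right (by have := s.le_degree c; omega)

variable [Finite σ]

theorem finite_squarefreeOnDegreeLE (T : Finset σ) (d : ℕ) :
    (squarefreeOnDegreeLE T d).Finite :=
  (Finsupp.finite_of_degree_le d).subset fun _ hs => hs.1

theorem finrank_restrictTotalDegree {K : Type*} [Field K] (d : ℕ) :
    finrank K (restrictTotalDegree σ K d) = (squarefreeOnDegreeLE (∅ : Finset σ) d).ncard := by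
  have : Finite (squarefreeOnDegreeLE (∅ : Finset σ) d) :=
    (finite_squarefreeOnDegreeLE _ d).to_subtype
  rw [← Nat.card_coe_set_eq, restrictTotalDegree,
    finrank_eq_nat_card_basis (basisRestrictSupport K _)]
  congr 2
  ext s
  simp [squarefreeOnDegreeLE, Finsupp.degree_apply, Finsupp.sum]

variable [DecidableEq σ]

theorem ncard_squarefreeOnDegreeLE_add_two {T : Finset σ} {c : σ} (hc : c ∉ T) (d : ℕ) :
    (squarefreeOnDegreeLE T (d + 2)).ncard =
      (squarefreeOnDegreeLE (insert c T) (d + 2)).ncard + (squarefreeOnDegreeLE T d).ncard := by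
  have hinter : squarefreeOnDegreeLE T (d + 2) ∩ {s | s c ≤ 1} =
      squarefreeOnDegreeLE (insert c T) (d + 2) := by
    ext s
    simp only [squarefreeOnDegreeLE, Set.mem_inter_iff, Set.mem_ofPred_eq,
      Finset.forall_mem_insert]
    tauto
  have hdeg (t : σ →₀ ℕ) : (t + Finsupp.single c 2).degree = t.degree + 2 := by
    rw [map_add, Finsupp.degree_single]
  have hdiff : squarefreeOnDegreeLE T (d + 2) \ {s | s c ≤ 1} =
      (· + Finsupp.single c 2) '' squarefreeOnDegreeLE T d := by
    ext s
    simp only [squarefreeOnDegreeLE, Set.mem_sdiff, Set.mem_image, Set.mem_ofPred_eq, not_le]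
    constructor
    · rintro ⟨⟨hs, hT⟩, hc2⟩
      have hle : Finsupp.single c 2 ≤ s := Finsupp.single_le_iff.2 hc2
      refine ⟨s - Finsupp.single c 2, ⟨?_, fun i hi => ?_⟩, tsub_add_cancel_of_le hle⟩
      · have := hdeg (s - Finsupp.single c 2)
        rw [tsub_add_cancel_of_le hle] at this
        omega
      · rw [Finsupp.tsub_apply]
        exact (Nat.sub_le _ _).trans (hT i hi)
    · rintro ⟨t, ⟨ht, hT⟩, rfl⟩
      refine ⟨⟨by rw [hdeg]; omega, fun i hi => ?_⟩, by simp⟩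
      rw [Finsupp.add_apply, Finsupp.single_eq_of_ne (ne_of_mem_of_not_mem hi hc), add_zero]
      exact hT i hi
  rw [← Set.ncard_inter_add_ncard_sdiff_eq_ncard _ {s | s c ≤ 1}
    (finite_squarefreeOnDegreeLE T (d + 2)), hinter, hdiff,
    Set.ncard_image_of_injective _ (add_left_injective _)]

theorem ncard_squarefreeOnDegreeLE_univ [Fintype σ] {d : ℕ} (hd : Fintype.card σ ≤ d) :
    (squarefreeOnDegreeLE (Finset.univ : Finset σ) d).ncard = 2 ^ Fintype.card σ := by
  have hbox : squarefreeOnDegreeLE (Finset.univ : Finset σ) d =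
      ((Fintype.piFinset fun _ => Finset.range 2).map
        Finsupp.equivFunOnFinite.symm.toEmbedding : Finset (σ →₀ ℕ)) := by
    ext s
    simp only [squarefreeOnDegreeLE, Finset.mem_univ, forall_const, Set.mem_ofPred_eq,
      Finset.coe_map, Set.mem_image, Finset.mem_coe, Fintype.mem_piFinset, Finset.mem_range]
    refine ⟨fun ⟨_, hs⟩ => ⟨s, fun i => Nat.lt_succ_of_le (hs i), by simp⟩, ?_⟩
    rintro ⟨s, hs, rfl⟩
    have hle (i : σ) : s i ≤ 1 := Nat.le_of_lt_succ (hs i)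
    refine ⟨?_, by simpa using hle⟩
    calc (Finsupp.equivFunOnFinite.symm s).degree = ∑ i, s i := by simp [Finsupp.degree_eq_sum]
      _ ≤ ∑ _i : σ, 1 := Finset.sum_le_sum fun i _ => hle i
      _ ≤ d := by simpa using hd
  rw [hbox, Set.ncard_coe_finset, Finset.card_map, Fintype.card_piFinset]
  simp

end Counting

section Dimension

variable {K σ : Type*} [Field K] [Fintype σ] [DecidableEq σ] {f : σ → MvPolynomial σ K}

theorem finrank_quotDegreeLE_span_image (hf : ∀ i, (f i).IsHomogeneous 2)
    (hreg : IsRegularInAnyOrder f) (T : Finset σ) (d : ℕ) :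
    finrank K (quotDegreeLE (Ideal.span (f '' T)) d) = (squarefreeOnDegreeLE T d).ncard := by
  induction T using Finset.induction_on generalizing d with
  | empty =>
    rw [Finset.coe_empty, Set.image_empty, Ideal.span_empty, finrank_quotDegreeLE_bot,
      finrank_restrictTotalDegree]
  | insert c T hc ih =>
    have hI : (Ideal.span (f '' T)).IsHomogeneous (homogeneousSubmodule σ K) :=
      Ideal.homogeneous_span _ _ fun _ ⟨i, _, hi⟩ =>
        ⟨2, hi ▸ (mem_homogeneousSubmodule 2 _).2 (hf i)⟩
    rw [Finset.coe_insert, Set.image_insert_eq, Ideal.span_insert]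
    rcases lt_or_ge d 2 with hd | hd
    · rw [finrank_quotDegreeLE_span_singleton_sup_of_lt hI (hf c) hd, ih,
        squarefreeOnDegreeLE_insert_of_lt_two T c hd]
    · obtain ⟨d, rfl⟩ := Nat.exists_eq_add_of_le' hd
      have hdim := finrank_quotDegreeLE_span_singleton_sup_add hI (hf c) (hreg T c hc) d
      rw [ih, ih] at hdim
      have hcount := ncard_squarefreeOnDegreeLE_add_two hc d
      omega

theorem finrank_quotient_span_range_eq_two_pow (hf : ∀ i, (f i).IsHomogeneous 2)
    (hreg : IsRegularInAnyOrder f) :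
    finrank K (MvPolynomial σ K ⧸ Ideal.span (Set.range f)) = 2 ^ Fintype.card σ :=
  finrank_quotient_eq_of_finrank_quotDegreeLE fun d hd => by
    rw [← Set.image_univ, ← Finset.coe_univ, finrank_quotDegreeLE_span_image hf hreg,
      ncard_squarefreeOnDegreeLE_univ hd]

end Dimension

end QuadricQuotient

open QuadricQuotient in
theorem finrank_quotient_quadrics_eq_two_pow_general
    (n : ℕ) (A : Matrix (Fin n) (Fin n) ℝ)
    (hA : ∀ v : Fin n → ℝ, v ≠ 0 → 0 < ∑ i, ∑ j, A i j * v i * v j)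
    (J : Ideal (MvPolynomial (Fin n) ℂ))
    (hJ : J = Ideal.span (Set.range fun i : Fin n => ∑ j, C (A i j : ℂ) * X i * X j)) :
    Module.finrank ℂ (MvPolynomial (Fin n) ℂ ⧸ J) = 2 ^ n := by
  subst hJ
  have := finrank_quotient_span_range_eq_two_pow (isHomogeneous_quadric _)
    (isRegularInAnyOrder_quadric_of_posDefQuadForm A hA)
  rwa [Fintype.card_fin] at this

/-- If `A` is an `n × n` real matrix whose associated quadratic form is positive definite,
then `ℂ[x_1, …, x_n] / (f_1, …, f_n)`, where `f i = ∑ j, A i j * x i * x j`, has dimension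
`2 ^ n` as a `ℂ`-vector space. -/
theorem finrank_quotient_quadrics_eq_two_pow
    (n : ℕ) (hn : 1 ≤ n) (A : Matrix (Fin n) (Fin n) ℝ)
    (hA : ∀ v : Fin n → ℝ, v ≠ 0 → 0 < ∑ i, ∑ j, A i j * v i * v j)
    (J : Ideal (MvPolynomial (Fin n) ℂ))
    (hJ : J = Ideal.span (Set.range fun i : Fin n => ∑ j, C (A i j : ℂ) * X i * X j)) :
    Module.finrank ℂ (MvPolynomial (Fin n) ℂ ⧸ J) = 2 ^ n :=
  finrank_quotient_quadrics_eq_two_pow_general n A hA J hJ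
end

section
/- Let n ≥ 1 and let A = (A_{ij}) be an n×n matrix with integer entries whose associated real quadratic form is positive definite, i.e. Σ_{i,j} A_{ij} v_i v_j > 0 for every nonzero v ∈ ℝⁿ. Let J̌_ℚ denote the ideal of ℚ[x_1, …, x_n] generated by the quadratic polynomials f_i := Σ_{j=1}^n A_{ij} x_i x_j (1 ≤ i ≤ n). Then the images under the quotient map of the 2^n square-free monomials ∏_{i ∈ K} x_i, indexed by the subsets K ⊆ {1, …, n}, form a basis of ℚ[x_1, …, x_n]/J̌_ℚ as a ℚ-vector space; in particular this quotient has ℚ-dimension 2^n. -/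
/-!
Write the quadrics as `f i = X i * ℓ i` with `ℓ i = ∑ j, A i j * X j`, and deform them to
`f i - b i * X i`. Anisotropy makes every principal submatrix of `A` invertible. Hence, if `k` lies
in the support `T` of `m`, a combination `∑ i ∈ T, c i * ℓ i` equals `X k` up to variables outside
`T`, while `x ^ m * ℓ i ≡ b i * x ^ m` modulo the deformed ideal for `i ∈ T`. So a monomial that is
not square-free reduces to monomials of smaller degree or of the same degree and larger support,
and the square-free monomials span both quotients.

For generic `b` the deformed ideal vanishes at `2 ^ n` points `z L`, each supported on `L` and
nonzero on `L`. Evaluating at these points gives a unitriangular system, so the square-free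
monomials are independent modulo the deformed ideal. Modulo the homogeneous ideal, the degree `d`
part of a relation lies in the deformed ideal up to terms of degree `< d`, which reduce to
square-free monomials of degree `< d`. Independence modulo the deformed ideal then forces the
degree `d` coefficients to vanish.
-/

open MvPolynomial Matrix

theorem MvPolynomial.homogeneousComponent_mul_of_isHomogeneous {σ R : Type*} [CommSemiring R]
    {f : MvPolynomial σ R} {m : ℕ} (hf : f.IsHomogeneous m) (q : MvPolynomial σ R) (d : ℕ) :
    homogeneousComponent d (q * f) = if m ≤ d then homogeneousComponent (d - m) q * f else 0 := by
  let := MvPolynomial.gradedAlgebra (σ := σ) (R := R)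
  rw [← decomposition.decompose'_apply, ← decomposition.decompose'_apply]
  exact DirectSum.coe_decompose_mul_of_right_mem (homogeneousSubmodule σ R) d hf

theorem Ideal.Quotient.mk_mem_span_image_of_mem_sup {K A ι : Type*} [Field K] [CommRing A]
    [Algebra K A] {I : Ideal A} {f : ι → A} {S : Set ι} {p : A}
    (hp : p ∈ I.restrictScalars K ⊔ Submodule.span K (f '' S)) :
    Ideal.Quotient.mk I p ∈ Submodule.span K ((Ideal.Quotient.mk I ∘ f) '' S) := by
  obtain ⟨y, hy, w, hw, rfl⟩ := Submodule.mem_sup.1 hp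
  rw [map_add, Ideal.Quotient.eq_zero_iff_mem.2 hy, zero_add, Set.image_comp,
    ← Ideal.Quotient.mkₐ_eq_mk K, ← AlgHom.coe_toLinearMap, ← Submodule.map_span]
  exact Submodule.mem_map_of_mem hw

theorem Matrix.mulVec_extend_zero {ι σ K : Type*} [Fintype ι] [Fintype σ] [CommSemiring K]
    (M : Matrix σ σ K) {e : ι → σ} (he : Function.Injective e) (v : ι → K) (i : ι) :
    (M *ᵥ Function.extend e v 0) (e i) = (M.submatrix e e *ᵥ v) i := by
  classical
  simp only [mulVec, dotProduct]
  rw [← Finset.sum_subset (Finset.subset_univ (Finset.univ.image e)), Finset.sum_image he.injOn]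
  · simp [he.extend_apply]
  · intro j _ hj
    rw [Function.extend_apply' _ _ _ (by simpa using hj), Pi.zero_apply, mul_zero]

theorem Matrix.toQuadraticForm'_apply {σ K : Type*} [Fintype σ] [DecidableEq σ] [CommRing K]
    (M : Matrix σ σ K) (v : σ → K) :
    M.toQuadraticForm' v = v ⬝ᵥ M *ᵥ v := by
  simp [toQuadraticForm', toLinearMap₂'_apply']

theorem Finsupp.card_support_le_degree {σ : Type*} (e : σ →₀ ℕ) : e.support.card ≤ e.degree := by
  rw [Finsupp.degree_apply, Finset.card_eq_sum_ones]
  exact Finset.sum_le_sum fun i hi => Nat.one_le_iff_ne_zero.2 (Finsupp.mem_support_iff.1 hi)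

namespace SquarefreeQuadric

variable {σ K : Type*} [Field K]

section LinearAlgebra

variable [DecidableEq σ] {M : Matrix σ σ K}

/-- The solution `z`, supported on `T`, of the system `(M *ᵥ z) i = y i` for `i ∈ T`; it is
meaningful only when the principal submatrix of `M` on `T` is invertible. -/
noncomputable def solveOn (M : Matrix σ σ K) (T : Finset σ) : (σ → K) →ₗ[K] σ → K :=
  Function.ExtendByZero.linearMap K Subtype.val ∘ₗ
    (M.submatrix (Subtype.val : T → σ) (Subtype.val : T → σ))⁻¹.mulVecLin ∘ₗ
    LinearMap.funLeft K K Subtype.val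

theorem solveOn_apply (T : Finset σ) (y : σ → K) :
    solveOn M T y = Function.extend Subtype.val
      ((M.submatrix (Subtype.val : T → σ) (Subtype.val : T → σ))⁻¹ *ᵥ (y ∘ Subtype.val)) 0 :=
  rfl

theorem solveOn_apply_of_notMem (T : Finset σ) (y : σ → K) {i : σ} (hi : i ∉ T) :
    solveOn M T y i = 0 := by
  rw [solveOn_apply]
  exact Function.extend_apply' _ _ _ (by simpa using hi)

variable [Fintype σ]

theorem anisotropic_toQuadraticForm'_transpose (hM : M.toQuadraticForm'.Anisotropic) :
    Mᵀ.toQuadraticForm'.Anisotropic := by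
  intro v hv
  apply hM v
  rwa [toQuadraticForm'_apply, dotProduct_mulVec, ← mulVec_transpose, dotProduct_comm,
    ← toQuadraticForm'_apply]

theorem eq_zero_of_mulVec_eq_zero_on (hM : M.toQuadraticForm'.Anisotropic) {T : Finset σ}
    {z : σ → K} (hz : ∀ i ∉ T, z i = 0) (hMz : ∀ i ∈ T, (M *ᵥ z) i = 0) : z = 0 := by
  refine hM z ?_
  rw [toQuadraticForm'_apply]
  refine Finset.sum_eq_zero fun i _ => ?_
  by_cases hi : i ∈ T
  · rw [hMz i hi, mul_zero]
  · rw [hz i hi, zero_mul]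

theorem isUnit_submatrix_of_anisotropic (hM : M.toQuadraticForm'.Anisotropic) (T : Finset σ) :
    IsUnit (M.submatrix (Subtype.val : T → σ) (Subtype.val : T → σ)) := by
  rw [← mulVec_injective_iff_isUnit, ← coe_mulVecLin, ← LinearMap.ker_eq_bot,
    LinearMap.ker_eq_bot']
  intro v hv
  have hz := eq_zero_of_mulVec_eq_zero_on hM (T := T) (z := Function.extend Subtype.val v 0)
    (fun i hi => Function.extend_apply' _ _ _ (by simpa using hi))
    (fun i hi => by rw [M.mulVec_extend_zero Subtype.val_injective v ⟨i, hi⟩]; exact congrFun hv _)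
  funext i
  simpa [Subtype.val_injective.extend_apply] using congrFun hz i

theorem mulVec_solveOn (hM : M.toQuadraticForm'.Anisotropic) (T : Finset σ) (y : σ → K)
    {i : σ} (hi : i ∈ T) : (M *ᵥ solveOn M T y) i = y i := by
  rw [solveOn_apply, M.mulVec_extend_zero Subtype.val_injective _ ⟨i, hi⟩, mulVec_mulVec,
    mul_nonsing_inv _ ((isUnit_submatrix_of_anisotropic hM T).map detMonoidHom), one_mulVec]
  rfl

theorem solveOn_eq_of_mulVec_eq_on (hM : M.toQuadraticForm'.Anisotropic) {T : Finset σ}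
    {y z : σ → K} (hz : ∀ i ∉ T, z i = 0) (hMz : ∀ i ∈ T, (M *ᵥ z) i = y i) :
    solveOn M T y = z := by
  rw [← sub_eq_zero]
  refine eq_zero_of_mulVec_eq_zero_on hM (T := T) (fun i hi => ?_) (fun i hi => ?_)
  · simp [solveOn_apply_of_notMem T y hi, hz i hi]
  · simp [mulVec_sub, mulVec_solveOn hM T y hi, hMz i hi]

theorem exists_forall_solveOn_ne_zero [Infinite K] (hM : M.toQuadraticForm'.Anisotropic) :
    ∃ b : σ → K, ∀ T : Finset σ, ∀ i ∈ T, solveOn M T b i ≠ 0 := by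
  obtain ⟨b, hb⟩ := Module.Dual.exists_forall_ne_zero_of_forall_exists
    (fun p : Σ T : Finset σ, T => LinearMap.proj p.2.1 ∘ₗ solveOn M p.1) fun ⟨T, i, hi⟩ => by
      refine ⟨M *ᵥ Pi.single i 1, ?_⟩
      rw [LinearMap.comp_apply, solveOn_eq_of_mulVec_eq_on hM (z := Pi.single i 1)
        (fun j hj => Pi.single_eq_of_ne (fun h => hj (h ▸ hi)) _) fun _ _ => rfl]
      simp
  exact ⟨b, fun T i hi => hb ⟨T, i, hi⟩⟩

end LinearAlgebra

noncomputable def squarefreeMonomial (s : Finset σ) : MvPolynomial σ K :=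
  ∏ i ∈ s, X i

theorem isHomogeneous_squarefreeMonomial (s : Finset σ) :
    (squarefreeMonomial (K := K) s).IsHomogeneous s.card := by
  simpa [squarefreeMonomial] using
    IsHomogeneous.prod s (fun i => (X i : MvPolynomial σ K)) (fun _ => 1)
      fun i _ => isHomogeneous_X K i

theorem monomial_eq_squarefreeMonomial {e : σ →₀ ℕ} (he : ∀ i, e i ≤ 1) :
    monomial e (1 : K) = squarefreeMonomial e.support := by
  rw [monic_monomial_eq, Finsupp.prod, squarefreeMonomial]
  refine Finset.prod_congr rfl fun i hi => ?_
  rw [show e i = 1 by have := Finsupp.mem_support_iff.1 hi; have := he i; omega, pow_one]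

theorem mem_sup_span_mono {I : Ideal (MvPolynomial σ K)} {S S' : Set (Finset σ)} (h : S ⊆ S')
    {p : MvPolynomial σ K}
    (hp : p ∈ I.restrictScalars K ⊔ Submodule.span K (squarefreeMonomial '' S)) :
    p ∈ I.restrictScalars K ⊔ Submodule.span K (squarefreeMonomial '' S') := by
  have hle : I.restrictScalars K ⊔ Submodule.span K (squarefreeMonomial '' S) ≤
      I.restrictScalars K ⊔ Submodule.span K (squarefreeMonomial '' S') :=
    sup_le_sup_left (Submodule.span_mono (Set.image_mono h)) _
  exact hle hp

variable [Fintype σ]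

theorem linearIndependent_prod_of_triangular (z : Finset σ → σ → K)
    (hz0 : ∀ L, ∀ i ∉ L, z L i = 0) (hz : ∀ L, ∀ i ∈ L, z L i ≠ 0) :
    LinearIndependent K (fun s : Finset σ => fun L => ∏ i ∈ s, z L i) := by
  classical
  rw [Fintype.linearIndependent_iff]
  intro c hc
  by_contra! hne
  obtain ⟨L, hL, hmin⟩ := (Finset.univ.filter fun s => c s ≠ 0).exists_min_image Finset.card
    (by simpa [Finset.filter_nonempty_iff] using hne)
  have hL : c L ≠ 0 := (Finset.mem_filter.1 hL).2
  have hcL := congrFun hc L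
  simp only [Finset.sum_apply, Pi.smul_apply, smul_eq_mul, Pi.zero_apply] at hcL
  rw [Finset.sum_eq_single L] at hcL
  · exact mul_ne_zero hL (Finset.prod_ne_zero_iff.2 (hz L)) hcL
  · intro s _ hsL
    by_cases hsub : s ⊆ L
    · by_cases hs : c s = 0
      · rw [hs, zero_mul]
      · have := hmin s (Finset.mem_filter.2 ⟨Finset.mem_univ _, hs⟩)
        exact absurd (Finset.card_lt_card (Finset.ssubset_iff_subset_ne.2 ⟨hsub, hsL⟩)) this.not_gt
    · obtain ⟨i, hi, hiL⟩ := Finset.not_subset.1 hsub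
      rw [Finset.prod_eq_zero hi (hz0 L i hiL), mul_zero]
  · simp

noncomputable def quadric (M : Matrix σ σ K) (i : σ) : MvPolynomial σ K :=
  ∑ j, C (M i j) * X i * X j

noncomputable def deformedQuadric (M : Matrix σ σ K) (b : σ → K) (i : σ) : MvPolynomial σ K :=
  quadric M i - C (b i) * X i

theorem deformedQuadric_zero (M : Matrix σ σ K) : deformedQuadric M 0 = quadric M := by
  ext1 i
  simp [deformedQuadric]

theorem quadric_eq_X_mul (M : Matrix σ σ K) (i : σ) :
    quadric M i = X i * ∑ j, C (M i j) * X j := by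
  rw [quadric, Finset.mul_sum]
  exact Finset.sum_congr rfl fun _ _ => by ring

theorem isHomogeneous_quadric (M : Matrix σ σ K) (i : σ) : (quadric M i).IsHomogeneous 2 :=
  IsHomogeneous.sum _ _ _ fun _ _ =>
    ((isHomogeneous_C _ _).mul (isHomogeneous_X _ _)).mul (isHomogeneous_X _ _)

theorem eval_deformedQuadric (M : Matrix σ σ K) (b z : σ → K) (i : σ) :
    eval z (deformedQuadric M b i) = z i * ((M *ᵥ z) i - b i) := by
  simp [deformedQuadric, quadric_eq_X_mul, mulVec, dotProduct, mul_sub, mul_comm]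

theorem monomial_mul_linearForm_sub_mem (M : Matrix σ σ K) (b : σ → K) {m : σ →₀ ℕ} {i : σ}
    (hi : i ∈ m.support) :
    monomial m 1 * ∑ j, C (M i j) * X j - b i • monomial m 1 ∈
      Ideal.span (Set.range (deformedQuadric M b)) := by
  obtain ⟨a, rfl⟩ : ∃ a, m = a + Finsupp.single i 1 :=
    ⟨_, (tsub_add_cancel_of_le (Finsupp.single_le_iff.2
      (Nat.one_le_iff_ne_zero.2 (Finsupp.mem_support_iff.1 hi)))).symm⟩
  have : monomial (a + Finsupp.single i 1) (1 : K) * ∑ j, C (M i j) * X j -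
      b i • monomial (a + Finsupp.single i 1) 1 = monomial a 1 * deformedQuadric M b i := by
    rw [monomial_add_single, pow_one, deformedQuadric, quadric_eq_X_mul, smul_eq_C_mul]
    ring
  rw [this]
  exact Ideal.mul_mem_left _ _ (Ideal.subset_span ⟨i, rfl⟩)

variable [DecidableEq σ] {M : Matrix σ σ K}

theorem monomial_mul_X_mem (hM : M.toQuadraticForm'.Anisotropic) (b : σ → K)
    {N : Submodule K (MvPolynomial σ K)}
    (hI : (Ideal.span (Set.range (deformedQuadric M b))).restrictScalars K ≤ N)
    {m : σ →₀ ℕ} (hm : monomial m 1 ∈ N) (hX : ∀ j ∉ m.support, monomial m 1 * X j ∈ N)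
    {k : σ} (hk : k ∈ m.support) : monomial m 1 * X k ∈ N := by
  set T := m.support
  -- `cᵀ M` agrees with the unit vector at `k` on `T`, so `∑ i, c i • ℓ i` is `X k` plus terms in
  -- variables outside `T`.
  set c := solveOn Mᵀ T (Pi.single k (1 : K))
  have hc : ∀ j ∈ T, ∑ i, c i * M i j = (Pi.single k 1 : σ → K) j := fun j hj => by
    rw [← mulVec_solveOn (anisotropic_toQuadraticForm'_transpose hM) T (Pi.single k 1) hj]
    simp [c, mulVec, dotProduct, mul_comm]
  set x : MvPolynomial σ K := monomial m 1
  have hsum : ∑ i, c i • (x * ∑ j, C (M i j) * X j) =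
      x * X k + ∑ j ∈ Tᶜ, (∑ i, c i * M i j) • (x * X j) := by
    calc ∑ i, c i • (x * ∑ j, C (M i j) * X j) = ∑ j, (∑ i, c i * M i j) • (x * X j) := by
          simp only [Finset.mul_sum, Finset.smul_sum, Finset.sum_smul]
          rw [Finset.sum_comm]
          refine Finset.sum_congr rfl fun j _ => Finset.sum_congr rfl fun i _ => ?_
          rw [smul_eq_C_mul, smul_eq_C_mul, C_mul]
          ring
      _ = ∑ j ∈ T, (∑ i, c i * M i j) • (x * X j) +
          ∑ j ∈ Tᶜ, (∑ i, c i * M i j) • (x * X j) := (Finset.sum_add_sum_compl T _).symm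
      _ = _ := by
          rw [Finset.sum_congr rfl fun j hj => by rw [hc j hj]]
          simp [Pi.single_apply, hk]
  have hkey : x * X k = ∑ i, c i • (x * ∑ j, C (M i j) * X j - b i • x) +
      (∑ i, c i * b i) • x - ∑ j ∈ Tᶜ, (∑ i, c i * M i j) • (x * X j) := by
    simp only [smul_sub, Finset.sum_sub_distrib, smul_smul, ← Finset.sum_smul, hsum]
    abel
  rw [hkey]
  refine sub_mem (add_mem (sum_mem fun i _ => ?_) (N.smul_mem _ hm))
    (sum_mem fun j hj => N.smul_mem _ (hX j (Finset.mem_compl.1 hj)))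
  by_cases hi : i ∈ T
  · exact N.smul_mem _ (hI (monomial_mul_linearForm_sub_mem M b hi))
  · rw [show c i = 0 from solveOn_apply_of_notMem T _ hi, zero_smul]
    exact N.zero_mem

theorem monomial_mem_sup_span (hM : M.toQuadraticForm'.Anisotropic) (b : σ → K)
    (e : σ →₀ ℕ) :
    monomial e (1 : K) ∈ (Ideal.span (Set.range (deformedQuadric M b))).restrictScalars K ⊔
      Submodule.span K (squarefreeMonomial '' {s | s.card ≤ e.degree}) := by
  by_cases hsq : ∀ i, e i ≤ 1
  · rw [monomial_eq_squarefreeMonomial hsq]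
    exact Submodule.mem_sup_right (Submodule.subset_span ⟨_, e.card_support_le_degree, rfl⟩)
  obtain ⟨k, hk⟩ : ∃ k, 1 < e k := by simpa using hsq
  obtain ⟨m, rfl⟩ : ∃ m, e = m + Finsupp.single k 1 :=
    ⟨_, (tsub_add_cancel_of_le (Finsupp.single_le_iff.2 (by omega))).symm⟩
  have hkm : k ∈ m.support := by
    simp only [Finsupp.mem_support_iff, Finsupp.add_apply, Finsupp.single_eq_same] at hk ⊢
    omega
  rw [monomial_add_single, pow_one]
  refine monomial_mul_X_mem hM b le_sup_left ?_ (fun j hj => ?_) hkm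
  · exact mem_sup_span_mono (fun s (hs : s.card ≤ _) => hs.trans (by simp))
      (monomial_mem_sup_span hM b m)
  · rw [← pow_one (X j), ← monomial_add_single]
    exact mem_sup_span_mono (fun s (hs : s.card ≤ _) => hs.trans (by simp))
      (monomial_mem_sup_span hM b (m + Finsupp.single j 1))
termination_by (e.degree, Fintype.card σ - e.support.card)
decreasing_by
  all_goals
    subst_vars
    simp only [Prod.lex_def, map_add, Finsupp.degree_single]
  · omega
  · have hsupp_k : (m + Finsupp.single k 1).support = m.support := by
      ext i
      by_cases hi : i = k <;> simp_all [Finsupp.single_apply]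
    have hsupp_j : (m + Finsupp.single j 1).support = insert j m.support := by
      ext i
      by_cases hi : i = j <;> simp_all [Finsupp.single_apply]
    have := Finset.card_le_univ (insert j m.support)
    rw [Finset.card_insert_of_notMem hj] at this
    rw [hsupp_k, hsupp_j, Finset.card_insert_of_notMem hj]
    exact Or.inr ⟨trivial, by omega⟩

theorem mem_sup_span_of_totalDegree_le (hM : M.toQuadraticForm'.Anisotropic) (b : σ → K)
    {p : MvPolynomial σ K} {D : ℕ} (hp : p.totalDegree ≤ D) :
    p ∈ (Ideal.span (Set.range (deformedQuadric M b))).restrictScalars K ⊔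
      Submodule.span K (squarefreeMonomial '' {s | s.card ≤ D}) := by
  rw [p.as_sum]
  refine Submodule.sum_mem _ fun e he => ?_
  rw [← mul_one (coeff e p), ← smul_eq_mul, ← smul_monomial]
  refine Submodule.smul_mem _ _ ?_
  exact mem_sup_span_mono (fun s hs => le_trans hs ((le_totalDegree he).trans hp))
    (monomial_mem_sup_span hM b e)

theorem span_range_mk_squarefreeMonomial_eq_top (hM : M.toQuadraticForm'.Anisotropic) (b : σ → K) :
    Submodule.span K (Set.range fun s =>
      Ideal.Quotient.mk (Ideal.span (Set.range (deformedQuadric M b))) (squarefreeMonomial s)) =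
      ⊤ := by
  refine eq_top_iff.2 fun x _ => ?_
  obtain ⟨p, rfl⟩ := Ideal.Quotient.mk_surjective x
  exact Submodule.span_mono (Set.image_subset_range _ _)
    (Ideal.Quotient.mk_mem_span_image_of_mem_sup (mem_sup_span_of_totalDegree_le hM b le_rfl))

theorem exists_linearIndependent_mk_squarefreeMonomial_deformed [Infinite K]
    (hM : M.toQuadraticForm'.Anisotropic) :
    ∃ b : σ → K, LinearIndependent K fun s =>
      Ideal.Quotient.mk (Ideal.span (Set.range (deformedQuadric M b))) (squarefreeMonomial s) := by
  obtain ⟨b, hb⟩ := exists_forall_solveOn_ne_zero hM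
  refine ⟨b, ?_⟩
  have hzero (L : Finset σ) :
      Ideal.span (Set.range (deformedQuadric M b)) ≤ RingHom.ker (aeval (solveOn M L b)) := by
    refine Ideal.span_le.2 ?_
    rintro _ ⟨i, rfl⟩
    change eval (solveOn M L b) (deformedQuadric M b i) = 0
    rw [eval_deformedQuadric]
    by_cases hi : i ∈ L
    · rw [mulVec_solveOn hM L b hi, sub_self, mul_zero]
    · rw [solveOn_apply_of_notMem L b hi, zero_mul]
  let φ := Ideal.Quotient.liftₐ (Ideal.span (Set.range (deformedQuadric M b)))
    (AlgHom.pi fun L => aeval (solveOn M L b)) fun p hp => funext fun L => by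
      rw [AlgHom.pi_apply, Pi.zero_apply]
      exact hzero L hp
  refine LinearIndependent.of_comp φ.toLinearMap ?_
  have hφ : ⇑φ.toLinearMap ∘ (fun s => Ideal.Quotient.mk _ (squarefreeMonomial s)) =
      fun s L => ∏ i ∈ s, solveOn M L b i := by
    ext s L
    rw [Function.comp_apply, AlgHom.toLinearMap_apply, ← Ideal.Quotient.mkₐ_eq_mk K,
      ← AlgHom.comp_apply, Ideal.Quotient.liftₐ_comp]
    simp [squarefreeMonomial]
  rw [hφ]
  exact linearIndependent_prod_of_triangular _ (fun L _ hi => solveOn_apply_of_notMem L b hi) hb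

theorem homogeneousComponent_mem_sup_span (hM : M.toQuadraticForm'.Anisotropic) (b : σ → K)
    {p : MvPolynomial σ K} (hp : p ∈ Ideal.span (Set.range (quadric M))) (d : ℕ) :
    homogeneousComponent d p ∈ (Ideal.span (Set.range (deformedQuadric M b))).restrictScalars K ⊔
      Submodule.span K (squarefreeMonomial '' {s | s.card < d}) := by
  obtain ⟨q, rfl⟩ := Ideal.mem_span_range_iff_exists_fun.1 hp
  rw [map_sum]
  refine Submodule.sum_mem _ fun i _ => ?_
  rw [homogeneousComponent_mul_of_isHomogeneous (isHomogeneous_quadric M i)]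
  split_ifs with hd
  · set r := homogeneousComponent (d - 2) (q i)
    have hr : (r * X i).totalDegree ≤ d - 1 :=
      (totalDegree_mul _ _).trans (by
        grw [(homogeneousComponent_isHomogeneous _ _).totalDegree_le, totalDegree_X]
        omega)
    rw [show r * quadric M i = r * deformedQuadric M b i + b i • (r * X i) by
      rw [deformedQuadric, smul_eq_C_mul]; ring]
    refine add_mem (Submodule.mem_sup_left (Ideal.mul_mem_left _ _ (Ideal.subset_span ⟨i, rfl⟩)))
      (Submodule.smul_mem _ _ ?_)
    exact mem_sup_span_mono (fun s (hs : s.card ≤ d - 1) => show s.card < d by omega)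
      (mem_sup_span_of_totalDegree_le hM b hr)
  · exact zero_mem _

theorem linearIndependent_mk_squarefreeMonomial [Infinite K]
    (hM : M.toQuadraticForm'.Anisotropic) :
    LinearIndependent K fun s =>
      Ideal.Quotient.mk (Ideal.span (Set.range (quadric M))) (squarefreeMonomial s) := by
  obtain ⟨b, hb⟩ := exists_linearIndependent_mk_squarefreeMonomial_deformed hM
  set v := fun s => Ideal.Quotient.mk (Ideal.span (Set.range (deformedQuadric M b)))
    (squarefreeMonomial (K := K) s)
  rw [Fintype.linearIndependent_iff]
  intro c hc s₀
  have hmem : ∑ s, c s • squarefreeMonomial s ∈ Ideal.span (Set.range (quadric M)) := by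
    rw [← Ideal.Quotient.eq_zero_iff_mem, ← Ideal.Quotient.mkₐ_eq_mk K, map_sum]
    simpa only [map_smul, Ideal.Quotient.mkₐ_eq_mk] using hc
  set d := s₀.card
  set c' : Finset σ → K := fun s => if s.card = d then c s else 0
  have hcomp : homogeneousComponent d (∑ s, c s • squarefreeMonomial (K := K) s) =
      ∑ s, c' s • squarefreeMonomial s := by
    rw [map_sum]
    refine Finset.sum_congr rfl fun s _ => ?_
    rw [map_smul, homogeneousComponent_of_mem (isHomogeneous_squarefreeMonomial s)]
    by_cases hs : s.card = d <;> simp [c', hs, eq_comm]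
  have hlow := Ideal.Quotient.mk_mem_span_image_of_mem_sup
    (homogeneousComponent_mem_sup_span hM b hmem d)
  have htop : Ideal.Quotient.mk _ (∑ s, c' s • squarefreeMonomial s) ∈
      Submodule.span K (v '' {s | s.card = d}) := by
    rw [← Ideal.Quotient.mkₐ_eq_mk K, map_sum]
    refine Submodule.sum_mem _ fun s _ => ?_
    by_cases hs : s.card = d
    · exact Submodule.smul_mem _ _ (Submodule.subset_span (Set.mem_image_of_mem v hs))
    · simp [c', hs]
  rw [hcomp] at hlow
  have hzero := Submodule.disjoint_def.1
    (hb.disjoint_span_image (s := {s | s.card = d}) (t := {s | s.card < d})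
      (Set.disjoint_left.2 fun s (h₁ : _ = _) (h₂ : _ < _) => h₂.ne h₁)) _ htop hlow
  rw [← Ideal.Quotient.mkₐ_eq_mk K, map_sum] at hzero
  simp only [map_smul, Ideal.Quotient.mkₐ_eq_mk] at hzero
  simpa [c', d] using Fintype.linearIndependent_iff.1 hb c' hzero s₀

theorem anisotropic_toQuadraticForm'_map_intCast {ι : Type*} [Fintype ι] [DecidableEq ι]
    (A : Matrix ι ι ℤ) (hA : ∀ v : ι → ℝ, v ≠ 0 → 0 < ∑ i, ∑ j, (A i j : ℝ) * v i * v j) :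
    (A.map (Int.cast : ℤ → ℚ)).toQuadraticForm'.Anisotropic := by
  intro v hv
  by_contra hne
  have hpos := hA (fun i => v i) fun h => hne (funext fun i => by simpa using congrFun h i)
  rw [toQuadraticForm'_apply] at hv
  have hcast : ((v ⬝ᵥ A.map (Int.cast : ℤ → ℚ) *ᵥ v : ℚ) : ℝ) =
      ∑ i, ∑ j, (A i j : ℝ) * v i * v j := by
    simp only [dotProduct, mulVec, map_apply, Rat.cast_sum, Rat.cast_mul, Rat.cast_intCast,
      Finset.mul_sum]
    exact Finset.sum_congr rfl fun i _ => Finset.sum_congr rfl fun j _ => by ring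
  rw [← hcast, hv, Rat.cast_zero] at hpos
  exact hpos.false

end SquarefreeQuadric

open SquarefreeQuadric in
theorem squarefree_monomials_basis_quotient_quadrics_rat_general
    (n : ℕ) (A : Matrix (Fin n) (Fin n) ℤ)
    (hA : ∀ v : Fin n → ℝ, v ≠ 0 → 0 < ∑ i, ∑ j, (A i j : ℝ) * v i * v j)
    (J : Ideal (MvPolynomial (Fin n) ℚ))
    (hJ : J = Ideal.span (Set.range fun i : Fin n => ∑ j, C (A i j : ℚ) * X i * X j)) :
    (∃ b : Module.Basis (Finset (Fin n)) ℚ (MvPolynomial (Fin n) ℚ ⧸ J),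
        ∀ K : Finset (Fin n), b K = Ideal.Quotient.mk J (∏ i ∈ K, X i)) ∧
      Module.finrank ℚ (MvPolynomial (Fin n) ℚ ⧸ J) = 2 ^ n := by
  have hM := anisotropic_toQuadraticForm'_map_intCast A hA
  obtain rfl : J = Ideal.span (Set.range (quadric (A.map (Int.cast : ℤ → ℚ)))) := hJ
  have hspan := span_range_mk_squarefreeMonomial_eq_top hM 0
  rw [deformedQuadric_zero] at hspan
  let B := Module.Basis.mk (linearIndependent_mk_squarefreeMonomial hM) hspan.ge
  refine ⟨⟨B, fun s => Module.Basis.mk_apply _ _ s⟩, ?_⟩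
  rw [Module.finrank_eq_card_basis B, Fintype.card_finset, Fintype.card_fin]

/-- Rational-coefficient version: if `A` is an `n × n` integer matrix whose associated real
quadratic form is positive definite, and `J̌_ℚ ⊆ ℚ[x_1, …, x_n]` is the ideal generated by the
quadrics `f i = ∑ j, A i j * x i * x j`, then the images of the `2 ^ n` square-free monomials
`∏ i ∈ K, x i` form a `ℚ`-basis of the quotient; in particular the quotient has
`ℚ`-dimension `2 ^ n`. -/
theorem squarefree_monomials_basis_quotient_quadrics_rat
    (n : ℕ) (hn : 1 ≤ n) (A : Matrix (Fin n) (Fin n) ℤ)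
    (hA : ∀ v : Fin n → ℝ, v ≠ 0 → 0 < ∑ i, ∑ j, (A i j : ℝ) * v i * v j)
    (J : Ideal (MvPolynomial (Fin n) ℚ))
    (hJ : J = Ideal.span (Set.range fun i : Fin n => ∑ j, C (A i j : ℚ) * X i * X j)) :
    (∃ b : Module.Basis (Finset (Fin n)) ℚ (MvPolynomial (Fin n) ℚ ⧸ J),
        ∀ K : Finset (Fin n), b K = Ideal.Quotient.mk J (∏ i ∈ K, X i)) ∧
      Module.finrank ℚ (MvPolynomial (Fin n) ℚ ⧸ J) = 2 ^ n :=
  squarefree_monomials_basis_quotient_quadrics_rat_general n A hA J hJ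
end

section
/- Let P be a root pairing over a field of characteristic zero (for instance, the root system of a complex semisimple Lie algebra), with roots α_k, reflections s_k, and Cartan integers a_{kl} = ⟨α_k, α_l^∨⟩, so that s_l(α_k) = α_k − a_{kl} α_l. Suppose i and j are indices with a_{ij} a_{ji} = 3 (the G₂ case, where s_i s_j has order 6). Then the following identity holds in the ambient vector space: α_i + (s_i ∘ s_j)(α_i) + (s_i ∘ s_j)^2(α_i) = 4 α_i − 2 a_{ij} α_j. -/
/-!
The product `s_i s_j` preserves the plane spanned by `α_i` and `α_j`, and its matrix there only
involves the Cartan integers. With `a_ij a_ji = 3` one computes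
`(s_i s_j)(α_i) = 2 α_i - a_ij α_j` and `(s_i s_j)^2(α_i) = α_i - a_ij α_j`; adding `α_i` gives
the identity.
-/

namespace RootPairing

variable {ι R M N : Type*} [CommRing R] [AddCommGroup M] [Module R M] [AddCommGroup N]
  [Module R N] (P : RootPairing ι R M N) (i j : ι)

lemma reflection_mul_reflection_apply_smul_root_sub_smul_root (c d : R) :
    (P.reflection i * P.reflection j) (c • P.root i - d • P.root j) =
      (P.pairing j i * (c * P.pairing i j - d) - c) • P.root i
        - (c * P.pairing i j - d) • P.root j := by
  simp only [LinearEquiv.mul_apply, map_sub, map_neg, map_smul, reflection_apply_self,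
    reflection_apply_root]
  module

lemma reflection_mul_reflection_apply_root_self :
    (P.reflection i * P.reflection j) (P.root i) =
      (P.pairing i j * P.pairing j i - 1) • P.root i - P.pairing i j • P.root j := by
  simpa [mul_comm] using P.reflection_mul_reflection_apply_smul_root_sub_smul_root i j 1 0

end RootPairing

theorem rootPairing_billey_identity_G2_general
    {ι K M N : Type*} [Field K]
    [AddCommGroup M] [Module K M] [AddCommGroup N] [Module K N]
    (P : RootPairing ι K M N) (i j : ι)
    (h : P.pairing i j * P.pairing j i = 3) :
    P.root i + (P.reflection i * P.reflection j) (P.root i)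
        + ((P.reflection i * P.reflection j) ^ 2) (P.root i) =
      (4 : K) • P.root i - (2 * P.pairing i j) • P.root j := by
  have h₁ : (P.reflection i * P.reflection j) (P.root i) =
      (2 : K) • P.root i - P.pairing i j • P.root j := by
    rw [P.reflection_mul_reflection_apply_root_self, h]
    norm_num
  have h₂ : ((P.reflection i * P.reflection j) ^ 2) (P.root i) =
      P.root i - P.pairing i j • P.root j := by
    rw [pow_two, LinearEquiv.mul_apply, h₁,
      P.reflection_mul_reflection_apply_smul_root_sub_smul_root]
    match_scalars
    · linear_combination h
    · ring
  rw [h₁, h₂]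
  module

/-- Key computation in Lemma 3.3 of the paper (the `G₂` case): in a root pairing over a
field of characteristic zero, with Cartan integers `a k l = ⟨α_k, α_l^∨⟩` (so that
`s_l (α_k) = α_k - a k l • α_l`), if `a i j * a j i = 3` then
`α_i + (s_i ∘ s_j)(α_i) + (s_i ∘ s_j)^2 (α_i) = 4 • α_i - (2 * a i j) • α_j`. -/
theorem rootPairing_billey_identity_G2
    {ι K M N : Type*} [Field K] [CharZero K]
    [AddCommGroup M] [Module K M] [AddCommGroup N] [Module K N]
    (P : RootPairing ι K M N) (i j : ι)
    (h : P.pairing i j * P.pairing j i = 3) :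
    P.root i + (P.reflection i * P.reflection j) (P.root i)
        + ((P.reflection i * P.reflection j) ^ 2) (P.root i) =
      (4 : K) • P.root i - (2 * P.pairing i j) • P.root j :=
  rootPairing_billey_identity_G2_general P i j h
end
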